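/- Let 𝒯 = {T♭, T†, T‡, T♯} and let 𝒯_k be its iterates. For every k ≥ 0 and every T ∈ 𝒯_k, writing d = δ(T) and δ♭_k = 3·2^k+k+1, g♭_k = 3·2^k, n♭_k = (9/2)·4^k+(9/2)·2^k, one has n(T) = n♭_k + g♭_k·(d−δ♭_k) + (d−δ♭_k)(d−δ♭_k−1)/2 and g(T) = g♭_k + d − δ♭_k = d − k − 1. -/
import Mathlib


/-- The three-letter alphabet `S = {0, 1, ∗}`. -/
inductive Tern | zero | one | star
deriving DecidableEq, Repr

/-- A string over `S`. -/
abbrev Str := List Tern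

/-- A (ordered) list of strings over `S`. -/
abbrev SList := List Str

/-- `clash x y` is true iff both `x, y ∈ {0,1}` and `x ≠ y`. -/
def clash : Tern → Tern → Bool
  | Tern.zero, Tern.one => true
  | Tern.one, Tern.zero => true
  | _, _ => false

/-- `dist u v`: the number of positions where both letters are binary and differ. -/
def distS (u v : Str) : ℕ := (u.zip v).countP (fun p => clash p.1 p.2)

/-- all strings of a list have length `m` -/
def uniform (L : SList) (m : ℕ) : Prop := ∀ s ∈ L, s.length = m

/-- A list is `k`-neighborly if any two entries occupying distinct positions `u, v`
satisfy `1 ≤ dist(u,v) ≤ k`. -/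
def kNbr (k : ℕ) (L : SList) : Prop :=
  L.Pairwise (fun u v => 1 ≤ distS u v ∧ distS u v ≤ k)

/-- The pairing `A ⊖ B`: entrywise concatenation of strings. -/
def pairL (A B : SList) : SList := List.zipWith (· ++ ·) A B

/-- The concatenation `AB = [v_i w_j]`, ordered lexicographically in `(i,j)`. -/
def concL (A B : SList) : SList := A.flatMap (fun u => B.map (fun v => u ++ v))

/-- the string `∗^m` of `m` jokers -/
def stars (m : ℕ) : Str := List.replicate m Tern.star

/-- A triple of lists `T = (A,B,C)` together with the (intended common) string
lengths `a` of the entries of `A` and `b` of the entries of `B` (and `C`). -/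
structure Triple where
  a : ℕ
  b : ℕ
  A : SList
  B : SList
  C : SList

namespace Triple

/-- `α(T)`: the common length of the strings of `A`. -/
def alpha (T : Triple) : ℕ := T.a

/-- `β(T)`: the common length of the strings of `B`. -/
def beta (T : Triple) : ℕ := T.b

/-- `δ(T) = α(T) + β(T)`. -/
def delta (T : Triple) : ℕ := T.a + T.b

/-- `n(T) = |A|`. -/
def nT (T : Triple) : ℕ := T.A.length

/-- `g(T) = |C|`. -/
def gT (T : Triple) : ℕ := T.C.length

/-- A triple `T = (A,B,C)` is nice if: (1) `dist(u,v) ≤ 1` for all entries `u,v` of `A`;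
(2) `|A| = |B|` and `A ⊖ B` is 2-neighborly; (3) `C` is a 1-neighborly sublist of `B`,
and `dist(u,v) ≤ 1` for every entry `u` of `B` and every entry `v` of `C`.
(The strings of `A` all have length `α(T)` and those of `B` length `β(T)`.) -/
def Nice (T : Triple) : Prop :=
  uniform T.A T.a ∧ uniform T.B T.b ∧
  (∀ u ∈ T.A, ∀ v ∈ T.A, distS u v ≤ 1) ∧
  T.A.length = T.B.length ∧
  kNbr 2 (pairL T.A T.B) ∧
  T.C.Sublist T.B ∧ kNbr 1 T.C ∧
  (∀ u ∈ T.B, ∀ v ∈ T.C, distS u v ≤ 1)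

/-- `T, T'` are concordant if `α(T) = α(T')` and `dist(u,v) ≤ 1` for all entries
`u, v` of `A + A'`. -/
def Concordant (T T' : Triple) : Prop :=
  T.a = T'.a ∧ ∀ u ∈ T.A ++ T'.A, ∀ v ∈ T.A ++ T'.A, distS u v ≤ 1

/-- The compound `T ⊗ T' = (A'', B'', C'')` where
`A'' = [0]A + [0]A' + (|C|·|C'|)·([1][∗^{α(T)}])`,
`B'' = [0]B[∗^{β(T')}] + [1][∗^{β(T)}]B' + [∗]CC'`,
`C'' = [0]C[∗^{β(T')}] + [1][∗^{β(T)}]C'`. -/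
def compound (T T' : Triple) : Triple where
  a := T.a + 1
  b := T.b + T'.b + 1
  A := (T.A.map (fun u => Tern.zero :: u)) ++ (T'.A.map (fun u => Tern.zero :: u)) ++
       List.replicate (T.C.length * T'.C.length) (Tern.one :: stars T.a)
  B := (T.B.map (fun u => Tern.zero :: (u ++ stars T'.b))) ++
       (T'.B.map (fun u => Tern.one :: (stars T.b ++ u))) ++
       ((concL T.C T'.C).map (fun u => Tern.star :: u))
  C := (T.C.map (fun u => Tern.zero :: (u ++ stars T'.b))) ++
       (T'.C.map (fun u => Tern.one :: (stars T.b ++ u)))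

/-- `T, T'` are congruent if they are concordant, `β(T) = β(T')`, `n(T) = n(T')`
and `g(T) = g(T')`. -/
def Congruent (T T' : Triple) : Prop :=
  Concordant T T' ∧ T.b = T'.b ∧ T.A.length = T'.A.length ∧ T.C.length = T'.C.length

end Triple

namespace Triple

/-- the iterates `T_0 = T`, `T_{k+1} = T_k ⊗ T_k` -/
def iterT (T : Triple) : ℕ → Triple
  | 0 => T
  | k + 1 => compound (iterT T k) (iterT T k)

end Triple

open Tern in
/-- `G = [0, 1]` -/
def Glist : SList := [[zero], [one]]

open Tern in
/-- `H = [00, 01, 1∗]` -/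
def Hlist : SList := [[zero, zero], [zero, one], [one, star]]

open Tern in
/-- `L = [000, 001, 01∗, 1∗∗]` -/
def Llist : SList := [[zero, zero, zero], [zero, zero, one], [zero, one, star], [one, star, star]]

open Tern in
/-- `T♭ = (3·[00] + 3·[01] + 3·[1∗], 3·H, H)`. -/
def Tflat : Triple :=
  ⟨2, 2,
    List.replicate 3 [zero, zero] ++ List.replicate 3 [zero, one] ++
      List.replicate 3 [one, star],
    (List.replicate 3 Hlist).flatten,
    Hlist⟩

open Tern in
/-- `T♯ = (2·(3·[00] + 3·[01]) + 9·[1∗], 2·([0]H[∗∗]) + 2·([1][∗∗]H) + [∗]HH,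
[0]H[∗∗] + [1][∗∗]H)`. -/
def Tsharp : Triple :=
  ⟨2, 5,
    (List.replicate 2 (List.replicate 3 [zero, zero] ++ List.replicate 3 [zero, one])).flatten ++
      List.replicate 9 [one, star],
    (List.replicate 2 (Hlist.map (fun u => zero :: (u ++ [star, star])))).flatten ++
      (List.replicate 2 (Hlist.map (fun u => one :: ([star, star] ++ u)))).flatten ++
      (concL Hlist Hlist).map (fun u => star :: u),
    Hlist.map (fun u => zero :: (u ++ [star, star])) ++
      Hlist.map (fun u => one :: ([star, star] ++ u))⟩

open Tern in
/-- `T† = (4·[00] + 4·[01] + 4·[1∗], 3·L, L)`. -/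
def Tdag : Triple :=
  ⟨2, 3,
    List.replicate 4 [zero, zero] ++ List.replicate 4 [zero, one] ++
      List.replicate 4 [one, star],
    (List.replicate 3 Llist).flatten,
    Llist⟩

open Tern in
/-- `T‡ = (2·[00] + 2·[01] + 3·[00] + 3·[01] + 6·[1∗],
2·([0]G[∗∗]) + 2·([1][∗]H) + [∗]GH, [0]G[∗∗] + [1][∗]H)`. -/
def Tddag : Triple :=
  ⟨2, 4,
    List.replicate 2 [zero, zero] ++ List.replicate 2 [zero, one] ++
      List.replicate 3 [zero, zero] ++ List.replicate 3 [zero, one] ++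
      List.replicate 6 [one, star],
    (List.replicate 2 (Glist.map (fun u => zero :: (u ++ [star, star])))).flatten ++
      (List.replicate 2 (Hlist.map (fun u => one :: (star :: u)))).flatten ++
      (concL Glist Hlist).map (fun u => star :: u),
    Glist.map (fun u => zero :: (u ++ [star, star])) ++
      Hlist.map (fun u => one :: (star :: u))⟩

namespace Triple

/-- the iterates `𝒮_0 = 𝒮`, `𝒮_{k+1} = {S ⊗ T : S, T ∈ 𝒮_k}` of a set of triples -/
def iterS (𝒮 : Set Triple) : ℕ → Set Triple
  | 0 => 𝒮
  | k + 1 => Set.image2 compound (iterS 𝒮 k) (iterS 𝒮 k)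

end Triple

/-- `𝒯 = {T♭, T†, T‡, T♯}` -/
def familyT : Set Triple := {Tflat, Tdag, Tddag, Tsharp}

namespace Triple

lemma nT_compound (S T : Triple) :
    nT (compound S T) = nT S + nT T + gT S * gT T := by
  simp [compound, nT, gT]; ring

lemma gT_compound (S T : Triple) :
    gT (compound S T) = gT S + gT T := by
  simp [compound, gT]

lemma delta_compound (S T : Triple) :
    delta (compound S T) = S.a + 1 + (S.b + T.b + 1) := rfl

lemma main_aux (k : ℕ) : ∀ T ∈ iterS familyT k,
    T.a = k + 2 ∧
    ((nT T : ℚ) = (9 / 2 * 4 ^ k + 9 / 2 * 2 ^ k)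
        + 3 * 2 ^ k * ((delta T : ℚ) - (3 * 2 ^ k + k + 1))
        + ((delta T : ℚ) - (3 * 2 ^ k + k + 1)) * ((delta T : ℚ) - (3 * 2 ^ k + k + 1) - 1) / 2 ∧
    (gT T : ℚ) = 3 * 2 ^ k + (delta T : ℚ) - (3 * 2 ^ k + k + 1) ∧
    (gT T : ℚ) = (delta T : ℚ) - k - 1) := by
  induction k with
  | zero =>
    intro T hT
    rcases hT with h | h | h | h <;> subst h <;>
      refine ⟨rfl, ?_, ?_, ?_⟩ <;>
      · norm_num [nT, gT, delta, Tflat, Tdag, Tddag, Tsharp, Hlist, Llist, Glist, concL]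
  | succ k ih =>
    rintro T ⟨S₁, hS₁, S₂, hS₂, rfl⟩
    obtain ⟨ha₁, hn₁, hg₁', hg₁⟩ := ih S₁ hS₁
    obtain ⟨ha₂, hn₂, hg₂', hg₂⟩ := ih S₂ hS₂
    have hd : (delta (compound S₁ S₂) : ℚ) = (delta S₁ : ℚ) + (delta S₂ : ℚ) - k := by
      have h1 : delta S₁ = S₁.a + S₁.b := rfl
      have h2 : delta S₂ = S₂.a + S₂.b := rfl
      rw [delta_compound, h1, h2, ha₁, ha₂]
      push_cast; ring
    have h4 : ∀ m : ℕ, (4 : ℚ) ^ m = 2 ^ m * 2 ^ m := by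
      intro m; rw [show (4:ℚ) = 2 * 2 by norm_num, mul_pow]
    refine ⟨by simp [compound, ha₁], ?_, ?_, ?_⟩
    · rw [hd]
      have hnc : (nT (compound S₁ S₂) : ℚ) = (nT S₁ : ℚ) + nT S₂ + gT S₁ * gT S₂ := by
        rw [nT_compound]; push_cast; ring
      rw [hnc]
      push_cast
      simp only [h4, pow_succ] at hn₁ hn₂ ⊢
      linear_combination hn₁ + hn₂ + (gT S₂ : ℚ) * hg₁
        + ((delta S₁ : ℚ) - k - 1) * hg₂
    · rw [hd]
      have hgc : (gT (compound S₁ S₂) : ℚ) = (gT S₁ : ℚ) + gT S₂ := by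
        rw [gT_compound]; push_cast; ring
      rw [hgc]
      push_cast
      simp only [pow_succ]
      linear_combination hg₁ + hg₂
    · rw [hd]
      have hgc : (gT (compound S₁ S₂) : ℚ) = (gT S₁ : ℚ) + gT S₂ := by
        rw [gT_compound]; push_cast; ring
      rw [hgc]
      push_cast
      linear_combination hg₁ + hg₂

end Triple

open Triple in
/-- For every `k ≥ 0` and every `T` in the `k`-th iterate of `𝒯 = {T♭, T†, T‡, T♯}`,
writing `d = δ(T)`, `δ♭_k = 3·2^k+k+1`, `g♭_k = 3·2^k`, `n♭_k = (9/2)·4^k+(9/2)·2^k`: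
`n(T) = n♭_k + g♭_k·(d−δ♭_k) + (d−δ♭_k)(d−δ♭_k−1)/2` and
`g(T) = g♭_k + d − δ♭_k = d − k − 1`. -/
theorem n_g_formulas_iterS (k : ℕ) (T : Triple) (hT : T ∈ iterS familyT k) :
    (nT T : ℚ) = (9 / 2 * 4 ^ k + 9 / 2 * 2 ^ k)
        + 3 * 2 ^ k * ((delta T : ℚ) - (3 * 2 ^ k + k + 1))
        + ((delta T : ℚ) - (3 * 2 ^ k + k + 1)) * ((delta T : ℚ) - (3 * 2 ^ k + k + 1) - 1) / 2 ∧
    (gT T : ℚ) = 3 * 2 ^ k + (delta T : ℚ) - (3 * 2 ^ k + k + 1) ∧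
    (gT T : ℚ) = (delta T : ℚ) - k - 1 := by
  obtain ⟨-, h⟩ := Triple.main_aux k T hT
  exact h
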